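/- arXiv:2001.11320 — 4 statements merged into one kernel-verified Lean document; each statement's English description precedes it below -/
import Mathlib

section
/- Let Ω ⊆ ℝⁿ be a bounded open convex domain and let φ, ψ be smooth convex functions on the closure of Ω with φ ≥ ψ on Ω and φ = ψ on ∂Ω. Let π : ℝⁿ → ℝ≥0 be a continuous nonnegative function. Then ∫_{∇φ(Ω)} π(y) dy ≤ ∫_{∇ψ(Ω)} π(y) dy, i.e., the weighted Monge–Ampère mass of φ is at most that of ψ. -/
open MeasureTheory InnerProductSpace
open scoped RealInnerProductSpace

/-- Supporting hyperplane inequality for a convex differentiable function. -/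
lemma support_ineq {n : ℕ} {s : Set (EuclideanSpace ℝ (Fin n))}
    {f : EuclideanSpace ℝ (Fin n) → ℝ} (hf : ConvexOn ℝ s f)
    {x₀ p : EuclideanSpace ℝ (Fin n)} (hp : HasGradientAt f p x₀) (hx₀ : x₀ ∈ s)
    {y : EuclideanSpace ℝ (Fin n)} (hy : y ∈ s) :
    f x₀ + ⟪p, y - x₀⟫ ≤ f y := by
  rcases eq_or_ne y x₀ with rfl | hne
  · simp
  set A : ℝ →ᵃ[ℝ] EuclideanSpace ℝ (Fin n) := AffineMap.lineMap x₀ y with hA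
  have hA0 : A 0 = x₀ := AffineMap.lineMap_apply_zero x₀ y
  have hA1 : A 1 = y := AffineMap.lineMap_apply_one x₀ y
  have hg : ConvexOn ℝ (A ⁻¹' s) (f ∘ A) := hf.comp_affineMap A
  have h0 : (0 : ℝ) ∈ A ⁻¹' s := by simp [Set.mem_preimage, hA0, hx₀]
  have h1 : (1 : ℝ) ∈ A ⁻¹' s := by simp [Set.mem_preimage, hA1, hy]
  have hAd : HasDerivAt A (A.linear 1) 0 := A.hasDerivAt
  have hlin : A.linear 1 = y - x₀ := by
    simp [hA, AffineMap.lineMap_linear]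
  have hpf : HasFDerivAt f (toDual ℝ _ p) x₀ := hp
  have hderiv : HasDerivAt (f ∘ A) (⟪p, y - x₀⟫) 0 := by
    have hAd' : HasDerivAt A (y - x₀) 0 := hlin ▸ hAd
    rw [← hA0] at hpf
    simpa [toDual_apply_apply] using hpf.comp_hasDerivAt 0 hAd'
  have hsl := hg.le_slope_of_hasDerivAt h0 h1 zero_lt_one hderiv
  rw [slope_def_field] at hsl
  simp only [Function.comp_apply, hA0, hA1] at hsl
  rw [show (1:ℝ) - 0 = 1 by norm_num, div_one] at hsl
  linarith

/-- Weighted comparison principle for Monge–Ampère measures: if `φ ≥ ψ` on a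
bounded open convex `Ω` with `φ = ψ` on `∂Ω`, then the weighted mass of the
gradient image of `φ` is at most that of `ψ`. -/
theorem stmt6 (n : ℕ) (Ω : Set (EuclideanSpace ℝ (Fin n)))
    (hΩo : IsOpen Ω) (hΩb : Bornology.IsBounded Ω) (hΩc : Convex ℝ Ω)
    (φ ψ : EuclideanSpace ℝ (Fin n) → ℝ)
    (hφs : ContDiff ℝ (⊤ : ℕ∞) φ) (hψs : ContDiff ℝ (⊤ : ℕ∞) ψ)
    (hφc : ConvexOn ℝ (closure Ω) φ) (hψc : ConvexOn ℝ (closure Ω) ψ)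
    (hge : ∀ x ∈ Ω, ψ x ≤ φ x)
    (hbd : ∀ x ∈ frontier Ω, φ x = ψ x)
    (π : EuclideanSpace ℝ (Fin n) → ℝ)
    (hπc : Continuous π) (hπ0 : ∀ y, 0 ≤ π y) :
    ∫ y in (fun x => gradient φ x) '' Ω, π y ≤
      ∫ y in (fun x => gradient ψ x) '' Ω, π y := by
  have hφd : Differentiable ℝ φ := hφs.differentiable (by simp)
  have hψd : Differentiable ℝ ψ := hψs.differentiable (by simp)
  -- Step 1: image inclusion
  have hsub : (fun x => gradient φ x) '' Ω ⊆ (fun x => gradient ψ x) '' Ω := by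
    rintro q ⟨x₀, hx₀, rfl⟩
    set p := gradient φ x₀ with hpdef
    have hp : HasGradientAt φ p x₀ := (hφd x₀).hasGradientAt
    have hx₀c : x₀ ∈ closure Ω := subset_closure hx₀
    -- support inequality for φ at x₀
    have hsupp : ∀ y ∈ closure Ω, φ x₀ + ⟪p, y - x₀⟫ ≤ φ y :=
      fun y hy => support_ineq hφc hp hx₀c hy
    -- minimize g := ψ - ⟪p, ·⟫ over closure Ω
    set g : EuclideanSpace ℝ (Fin n) → ℝ := fun x => ψ x - ⟪p, x⟫ with hg
    have hgc : Continuous g := hψs.continuous.sub (continuous_const.inner continuous_id)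
    have hcmp : IsCompact (closure Ω) := hΩb.isCompact_closure
    obtain ⟨x₁, hx₁c, hx₁m⟩ := hcmp.exists_isMinOn ⟨x₀, hx₀c⟩ hgc.continuousOn
    -- pick interior minimizer
    have key : ∃ x₂ ∈ Ω, IsMinOn g (closure Ω) x₂ := by
      by_cases hx₁Ω : x₁ ∈ Ω
      · exact ⟨x₁, hx₁Ω, hx₁m⟩
      · refine ⟨x₀, hx₀, ?_⟩
        have hx₁f : x₁ ∈ frontier Ω := by
          rw [frontier, hΩo.interior_eq]
          exact ⟨hx₁c, hx₁Ω⟩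
        have h1 : g x₀ ≤ g x₁ := by
          have h2 : φ x₀ + ⟪p, x₁ - x₀⟫ ≤ φ x₁ := hsupp x₁ hx₁c
          have h3 : φ x₁ = ψ x₁ := hbd x₁ hx₁f
          have h4 : ψ x₀ ≤ φ x₀ := hge x₀ hx₀
          have h5 : ⟪p, x₁ - x₀⟫ = ⟪p, x₁⟫ - ⟪p, x₀⟫ := inner_sub_right p x₁ x₀
          simp only [hg]
          linarith
        intro y hy
        exact le_trans h1 (hx₁m hy)
    obtain ⟨x₂, hx₂Ω, hx₂m⟩ := key
    -- local min, gradient zero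
    have hloc : IsLocalMin g x₂ := by
      apply hx₂m.isLocalMin
      exact Filter.mem_of_superset (hΩo.mem_nhds hx₂Ω) subset_closure
    have hgd : HasFDerivAt g (toDual ℝ _ (gradient ψ x₂) - toDual ℝ _ p) x₂ := by
      have h1 : HasFDerivAt ψ (toDual ℝ _ (gradient ψ x₂)) x₂ := (hψd x₂).hasGradientAt
      have h2 : HasFDerivAt (fun x : EuclideanSpace ℝ (Fin n) => ⟪p, x⟫) (toDual ℝ _ p) x₂ := by
        have : HasGradientAt (fun x : EuclideanSpace ℝ (Fin n) => ⟪p, x⟫) p x₂ := by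
          apply hasGradientAt_iff_hasFDerivAt.mpr
          exact (toDual ℝ (EuclideanSpace ℝ (Fin n)) p).hasFDerivAt
        exact this
      exact h1.sub h2
    have hzero := hloc.hasFDerivAt_eq_zero hgd
    have : toDual ℝ _ (gradient ψ x₂ - p) = 0 := by
      rw [map_sub]; exact hzero
    have hgp : gradient ψ x₂ = p := by
      have := (toDual ℝ (EuclideanSpace ℝ (Fin n))).injective
        (by rw [this]; simp : toDual ℝ _ (gradient ψ x₂ - p) = toDual ℝ _ 0)
      rwa [sub_eq_zero] at this
    exact ⟨x₂, hx₂Ω, hgp⟩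
  -- Step 2: integral monotonicity
  have hgradc : Continuous fun x => gradient ψ x := by
    have : Continuous fun x => fderiv ℝ ψ x := (hψs.continuous_fderiv (by simp))
    exact (LinearIsometryEquiv.continuous _).comp this
  have hK : IsCompact ((fun x => gradient ψ x) '' closure Ω) :=
    hΩb.isCompact_closure.image hgradc
  have hint : IntegrableOn π ((fun x => gradient ψ x) '' closure Ω) :=
    hπc.continuousOn.integrableOn_compact hK
  have hint2 : IntegrableOn π ((fun x => gradient ψ x) '' Ω) :=
    hint.mono_set (Set.image_mono subset_closure)
  refine setIntegral_mono_set hint2 ?_ hsub.eventuallyLE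
  exact Filter.Eventually.of_forall fun y => hπ0 y
end

section
/- Let p₀ > q₀ > 0 be integers with p₀ ≥ 2 and q₀ < p₀/2 + 3/4. For the weight π(x,y) = (x−y)²(x+y)², the weighted volume of the triangle T = {(x,y) : −x ≤ y ≤ x, p₀x + q₀y ≤ 1+2p₀} equals 8(1+2p₀)⁶ / (45(p₀² − q₀²)³). -/
/-!
With `A = c / (P - Q)` and `B = c / (P + Q)`, the triangle `{-x ≤ y ≤ x, P x + Q y ≤ c}` is the
image of the unit triangle `{s, t ≥ 0, s + t ≤ 1}` under `(s, t) ↦ (A s + B t, -A s + B t)`, since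
`x - y = 2 A s`, `x + y = 2 B t` and `P x + Q y = c (s + t)`. This map has determinant `2 A B` and
turns the weight `(x - y)² (x + y)²` into `16 A² B² s² t²`, while `∫ s² t²` over the unit triangle
is `2! 2! / 6! = 1 / 180`; so the integral is `32 (A B)³ / 180 = 8 c⁶ / (45 (P² - Q²)³)`.
-/

open MeasureTheory Set

theorem setIntegral_eq_integral_setIntegral_slice {α β E : Type*} [MeasurableSpace α]
    [MeasurableSpace β] [NormedAddCommGroup E] [NormedSpace ℝ E] {μ : Measure α} {ν : Measure β}
    [SFinite μ] [SFinite ν] {S : Set (α × β)} (hS : MeasurableSet S) {f : α × β → E}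
    (hf : IntegrableOn f S (μ.prod ν)) :
    ∫ p in S, f p ∂(μ.prod ν) = ∫ x, ∫ y in Prod.mk x ⁻¹' S, f (x, y) ∂ν ∂μ := by
  rw [← integral_indicator hS, integral_prod _ ((integrable_indicator_iff hS).2 hf)]
  congr 1 with x
  rw [← integral_indicator (measurable_prodMk_left hS)]
  rfl

theorem setIntegral_image_linear_prod (a b c d : ℝ) (hdet : a * d - b * c ≠ 0)
    {s : Set (ℝ × ℝ)} (hs : MeasurableSet s) (g : ℝ × ℝ → ℝ) :
    ∫ p in (fun p : ℝ × ℝ => (a * p.1 + b * p.2, c * p.1 + d * p.2)) '' s, g p =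
      |a * d - b * c| * ∫ p in s, g (a * p.1 + b * p.2, c * p.1 + d * p.2) := by
  set L : ℝ × ℝ →L[ℝ] ℝ × ℝ :=
    (Matrix.toLin (.finTwoProd ℝ) (.finTwoProd ℝ) !![a, b; c, d]).toContinuousLinearMap
  have hL : ⇑L = fun p : ℝ × ℝ => (a * p.1 + b * p.2, c * p.1 + d * p.2) := by
    ext p <;> simp [L]
  have hdetL : L.det = a * d - b * c := by
    simp [L, LinearMap.det_toContinuousLinearMap, LinearMap.det_toLin, Matrix.det_fin_two_of]
  have hinj : Function.Injective L :=
    (L.toContinuousLinearEquivOfDetNeZero (hdetL ▸ hdet)).injective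
  rw [← hL, integral_image_eq_integral_abs_det_fderiv_smul volume hs
    (f' := fun _ => L) (fun p _ => L.hasFDerivAt.hasFDerivWithinAt) hinj.injOn, hdetL]
  simp_rw [smul_eq_mul]
  rw [integral_const_mul, hL]

def unitTriangle : Set (ℝ × ℝ) := {p | 0 ≤ p.1 ∧ 0 ≤ p.2 ∧ p.1 + p.2 ≤ 1}

theorem measurableSet_unitTriangle : MeasurableSet unitTriangle :=
  (measurableSet_le measurable_const measurable_fst).inter
    ((measurableSet_le measurable_const measurable_snd).inter
      (measurableSet_le (measurable_fst.add measurable_snd) measurable_const))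

theorem isCompact_unitTriangle : IsCompact unitTriangle := by
  refine ((isCompact_Icc (a := (0 : ℝ)) (b := 1)).prod
    (isCompact_Icc (a := (0 : ℝ)) (b := 1))).of_isClosed_subset ?_ ?_
  · exact (isClosed_le continuous_const continuous_fst).inter
      ((isClosed_le continuous_const continuous_snd).inter
        (isClosed_le (continuous_fst.add continuous_snd) continuous_const))
  · rintro ⟨s, t⟩ ⟨hs, ht, hst⟩
    exact ⟨⟨hs, by linarith⟩, ⟨ht, by linarith⟩⟩

theorem setIntegral_unitTriangle_eq_intervalIntegral {f : ℝ × ℝ → ℝ}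
    (hf : IntegrableOn f unitTriangle) :
    ∫ p in unitTriangle, f p = ∫ s in (0 : ℝ)..1, ∫ t in (0 : ℝ)..(1 - s), f (s, t) := by
  rw [Measure.volume_eq_prod, setIntegral_eq_integral_setIntegral_slice measurableSet_unitTriangle
    (Measure.volume_eq_prod ℝ ℝ ▸ hf), intervalIntegral.integral_of_le zero_le_one,
    ← integral_Icc_eq_integral_Ioc, ← setIntegral_eq_integral_of_forall_compl_eq_zero]
  · refine setIntegral_congr_fun measurableSet_Icc fun s ⟨hs0, hs1⟩ => ?_
    have hslice : Prod.mk s ⁻¹' unitTriangle = Icc 0 (1 - s) := by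
      ext t
      simp only [unitTriangle, mem_preimage, mem_ofPred_eq, mem_Icc]
      exact ⟨fun ⟨_, ht, hst⟩ => ⟨ht, by linarith⟩, fun ⟨ht, hst⟩ => ⟨hs0, ht, by linarith⟩⟩
    simp only [hslice, intervalIntegral.integral_of_le (sub_nonneg.2 hs1),
      integral_Icc_eq_integral_Ioc]
  · intro s hs
    have hslice : Prod.mk s ⁻¹' unitTriangle = ∅ := by
      ext t
      simp only [unitTriangle, mem_preimage, mem_ofPred_eq, mem_empty_iff_false, iff_false]
      rintro ⟨h0, ht, hst⟩
      exact hs ⟨h0, by linarith⟩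
    rw [hslice, Measure.restrict_empty, integral_zero_measure]

theorem setIntegral_sq_mul_sq_unitTriangle :
    ∫ p in unitTriangle, p.1 ^ 2 * p.2 ^ 2 = 1 / 180 := by
  rw [setIntegral_unitTriangle_eq_intervalIntegral
    ((Continuous.continuousOn (by fun_prop)).integrableOn_compact isCompact_unitTriangle)]
  have hinner : ∀ s : ℝ, ∫ t in (0 : ℝ)..(1 - s), s ^ 2 * t ^ 2 = s ^ 2 * ((1 - s) ^ 3 / 3) :=
    fun s => by norm_num [integral_pow]
  simp_rw [hinner]
  have hF : ∀ s : ℝ, HasDerivAt (fun s : ℝ => s ^ 3 / 9 - s ^ 4 / 4 + s ^ 5 / 5 - s ^ 6 / 18)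
      (s ^ 2 * ((1 - s) ^ 3 / 3)) s := fun s => by
    refine ((((hasDerivAt_pow 3 s).div_const 9).sub ((hasDerivAt_pow 4 s).div_const 4)).add
      ((hasDerivAt_pow 5 s).div_const 5)).sub ((hasDerivAt_pow 6 s).div_const 18)
      |>.congr_deriv ?_
    norm_num
    ring
  rw [intervalIntegral.integral_eq_sub_of_hasDerivAt (fun s _ => hF s)
    (Continuous.intervalIntegrable (by fun_prop) _ _)]
  norm_num

def weylTriangle (P Q c : ℝ) : Set (ℝ × ℝ) :=
  {p | -p.1 ≤ p.2 ∧ p.2 ≤ p.1 ∧ P * p.1 + Q * p.2 ≤ c}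

theorem weylTriangle_eq_image_unitTriangle {P Q c : ℝ} (hQ : |Q| < P) (hc : 0 < c) :
    weylTriangle P Q c = (fun p : ℝ × ℝ => (c / (P - Q) * p.1 + c / (P + Q) * p.2,
      -(c / (P - Q)) * p.1 + c / (P + Q) * p.2)) '' unitTriangle := by
  obtain ⟨hQP, hPQ⟩ := abs_lt.1 hQ
  have hm : 0 < P - Q := by linarith
  have hp : 0 < P + Q := by linarith
  ext ⟨x, y⟩
  simp only [weylTriangle, unitTriangle, mem_ofPred_eq, mem_image, Prod.exists, Prod.mk.injEq]
  constructor
  · rintro ⟨h1, h2, h3⟩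
    refine ⟨(P - Q) * (x - y) / (2 * c), (P + Q) * (x + y) / (2 * c), ⟨?_, ?_, ?_⟩, ?_, ?_⟩
    · exact div_nonneg (mul_nonneg hm.le (by linarith)) (by positivity)
    · exact div_nonneg (mul_nonneg hp.le (by linarith)) (by positivity)
    · rw [← add_div, div_le_one (by positivity)]; linarith
    · field_simp; ring
    · field_simp; ring
  · rintro ⟨s, t, ⟨hs, ht, hst⟩, rfl, rfl⟩
    have hA : 0 ≤ c / (P - Q) * s := by positivity
    have hB : 0 ≤ c / (P + Q) * t := by positivity
    refine ⟨by linarith, by linarith, ?_⟩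
    have hlevel : P * (c / (P - Q) * s + c / (P + Q) * t) +
        Q * (-(c / (P - Q)) * s + c / (P + Q) * t) = c * (s + t) := by
      field_simp; ring
    rw [hlevel]
    nlinarith

theorem setIntegral_weylTriangle {P Q c : ℝ} (hQ : |Q| < P) (hc : 0 < c) :
    ∫ p in weylTriangle P Q c, (p.1 - p.2) ^ 2 * (p.1 + p.2) ^ 2 =
      8 * c ^ 6 / (45 * (P ^ 2 - Q ^ 2) ^ 3) := by
  obtain ⟨hQP, hPQ⟩ := abs_lt.1 hQ
  have hm : 0 < P - Q := by linarith
  have hp : 0 < P + Q := by linarith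
  set A := c / (P - Q) with hA
  set B := c / (P + Q) with hB
  have hdet : A * B - B * -A = 2 * (A * B) := by ring
  rw [weylTriangle_eq_image_unitTriangle hQ hc, setIntegral_image_linear_prod A B (-A) B
    (by rw [hdet]; positivity) measurableSet_unitTriangle, hdet, abs_of_pos (by positivity)]
  have hweight : ∀ p : ℝ × ℝ, (A * p.1 + B * p.2 - (-A * p.1 + B * p.2)) ^ 2 *
      (A * p.1 + B * p.2 + (-A * p.1 + B * p.2)) ^ 2 = 16 * (A * B) ^ 2 * (p.1 ^ 2 * p.2 ^ 2) :=
    fun p => by ring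
  dsimp only
  rw [integral_congr_ae (ae_of_all _ hweight), integral_const_mul,
    setIntegral_sq_mul_sq_unitTriangle, hA, hB, sq_sub_sq]
  field_simp
  ring

theorem stmt16_general (p₀ q₀ : ℕ) (hpq : q₀ < p₀) :
    ∫ p in {p : ℝ × ℝ | -p.1 ≤ p.2 ∧ p.2 ≤ p.1 ∧
        (p₀ : ℝ) * p.1 + (q₀ : ℝ) * p.2 ≤ 1 + 2 * p₀},
      (p.1 - p.2) ^ 2 * (p.1 + p.2) ^ 2 =
      8 * (1 + 2 * (p₀ : ℝ)) ^ 6 / (45 * ((p₀ : ℝ) ^ 2 - (q₀ : ℝ) ^ 2) ^ 3) :=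
  setIntegral_weylTriangle (by rw [abs_of_nonneg (Nat.cast_nonneg _)]; exact_mod_cast hpq)
    (by positivity)

/-- For integers `p₀ > q₀ > 0`, `p₀ ≥ 2`, `q₀ < p₀/2 + 3/4`, the weighted
volume of the triangle `{-x ≤ y ≤ x, p₀x + q₀y ≤ 1+2p₀}` with weight
`(x-y)²(x+y)²` equals `8(1+2p₀)⁶ / (45(p₀² - q₀²)³)`. -/
theorem stmt16 (p₀ q₀ : ℕ) (hq : 0 < q₀) (hpq : q₀ < p₀) (hp : 2 ≤ p₀)
    (hqb : (q₀ : ℝ) < p₀ / 2 + 3 / 4) :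
    ∫ p in {p : ℝ × ℝ | -p.1 ≤ p.2 ∧ p.2 ≤ p.1 ∧
        (p₀ : ℝ) * p.1 + (q₀ : ℝ) * p.2 ≤ 1 + 2 * p₀},
      (p.1 - p.2) ^ 2 * (p.1 + p.2) ^ 2 =
      8 * (1 + 2 * (p₀ : ℝ)) ^ 6 / (45 * ((p₀ : ℝ) ^ 2 - (q₀ : ℝ) ^ 2) ^ 3) :=
  stmt16_general p₀ q₀ hpq
end

section
/- For integers p₀ ≥ 9 and integers q₀ with 0 < q₀ < p₀/2 + 3/4, one has 8(1+2p₀)⁶/(45(p₀² − q₀²)³) ≤ 224755712/4100625, and this bound is strictly less than 10751/180. -/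
/-- Volume comparison: for `p₀ ≥ 9` and `0 < q₀ < p₀/2 + 3/4`,
`8(1+2p₀)⁶/(45(p₀²-q₀²)³) ≤ 224755712/4100625 < 10751/180`. -/
theorem stmt17 (p₀ q₀ : ℕ) (hp : 9 ≤ p₀) (hq : 0 < q₀)
    (hqb : (q₀ : ℝ) < (p₀ : ℝ) / 2 + 3 / 4) :
    8 * (1 + 2 * (p₀ : ℝ)) ^ 6 / (45 * ((p₀ : ℝ) ^ 2 - (q₀ : ℝ) ^ 2) ^ 3) ≤
        224755712 / 4100625 ∧
      (224755712 : ℝ) / 4100625 < 10751 / 180 := by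
  set p : ℝ := (p₀ : ℝ) with hpdef
  set q : ℝ := (q₀ : ℝ) with hqdef
  have hp' : (9 : ℝ) ≤ p := by rw [hpdef]; exact_mod_cast hp
  have hq1 : (1 : ℝ) ≤ q := by rw [hqdef]; exact_mod_cast hq
  -- q² < ((2p+3)/4)²
  have h1 : q ^ 2 < ((2 * p + 3) / 4) ^ 2 := by
    have h0 : q < (2 * p + 3) / 4 := by linarith
    nlinarith
  have hD : (0 : ℝ) < 3 * (2 * p + 1) * (2 * p - 3) / 16 := by nlinarith
  have h2 : 3 * (2 * p + 1) * (2 * p - 3) / 16 < p ^ 2 - q ^ 2 := by nlinarith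
  have hden : (0 : ℝ) < p ^ 2 - q ^ 2 := lt_trans hD h2
  have h3 : (3 * (2 * p + 1) * (2 * p - 3) / 16) ^ 3 ≤ (p ^ 2 - q ^ 2) ^ 3 :=
    pow_le_pow_left₀ hD.le h2.le 3
  -- cube the linear inequality 15(2p+1) ≤ 19(2p-3)
  have hc : (15 * (2 * p + 1)) ^ 3 ≤ (19 * (2 * p - 3)) ^ 3 := by
    apply pow_le_pow_left₀ (by linarith) (by linarith)
  have hc' : 3375 * (2 * p + 1) ^ 3 ≤ 6859 * (2 * p - 3) ^ 3 := by nlinarith [hc]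
  have hc2 := mul_le_mul_of_nonneg_left hc'
    (show (0 : ℝ) ≤ 9720 * (2 * p + 1) ^ 3 by positivity)
  have key : 8 * (1 + 2 * p) ^ 6 * 4100625 ≤
      224755712 * (45 * (3 * (2 * p + 1) * (2 * p - 3) / 16) ^ 3) := by
    nlinarith [hc2]
  have main : 8 * (1 + 2 * p) ^ 6 * 4100625 ≤ 224755712 * (45 * (p ^ 2 - q ^ 2) ^ 3) := by
    nlinarith [key, h3]
  refine ⟨?_, by norm_num⟩
  rw [div_le_div_iff₀ (by positivity) (by norm_num)]
  linarith [main]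
end

section
/- Let f : [0,1] × K → ℝ be such that for each p ∈ K, t ↦ f(t,p) is convex, and suppose f(·, p) is uniformly bounded. Then t ↦ ∫_K f(t,p) dμ(p) is convex and possesses left and right derivatives at every t ∈ (0,1), given by ∫_K ∂⁻_t f(t,p) dμ and ∫_K ∂⁺_t f(t,p) dμ respectively; moreover if for almost every p the left and right derivatives of f(·,p) at t coincide, then the integral is differentiable at t with derivative ∫_K ∂_t f(t,p) dμ(p). -/
/-!
Each slope `(f s p - f t p) / (s - t)` is monotone in `s` by convexity, so for `s` near `t` it is
squeezed between the slopes at two fixed points `a < t < b`. These are integrable, and dominated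
convergence lets one exchange the one-sided limit of the difference quotients with the integral.
-/

open MeasureTheory Set Filter Topology

namespace ConvexOn

variable {S : Set ℝ} {g : ℝ → ℝ} {t : ℝ}

lemma tendsto_slope_derivWithin_Ici (hg : ConvexOn ℝ S g) (ht : t ∈ interior S) :
    Tendsto (slope g t) (𝓝[>] t) (𝓝 (derivWithin g (Ici t) t)) := by
  have h := hg.hasDerivWithinAt_rightDeriv_of_mem_interior ht
  rwa [derivWithin_Ioi_eq_Ici, hasDerivWithinAt_iff_tendsto_slope' self_notMem_Ioi] at h

lemma tendsto_slope_derivWithin_Iic (hg : ConvexOn ℝ S g) (ht : t ∈ interior S) :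
    Tendsto (slope g t) (𝓝[<] t) (𝓝 (derivWithin g (Iic t) t)) := by
  have h := hg.hasDerivWithinAt_leftDeriv_of_mem_interior ht
  rw [← h.Iic_of_Iio.derivWithin (uniqueDiffWithinAt_Iic t)] at h
  rwa [hasDerivWithinAt_iff_tendsto_slope' self_notMem_Iio] at h

lemma abs_slope_le_of_mem_Icc (hg : ConvexOn ℝ S g) (htS : t ∈ S) {a b s : ℝ}
    (ha : a ∈ S \ {t}) (hb : b ∈ S \ {t}) (hs : s ∈ S \ {t}) (has : a ≤ s) (hsb : s ≤ b) :
    |slope g t s| ≤ |slope g t a| + |slope g t b| :=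
  (abs_le_max_abs_abs (hg.slope_mono htS ha hs has) (hg.slope_mono htS hs hb hsb)).trans
    (max_le_add_of_nonneg (abs_nonneg _) (abs_nonneg _))

end ConvexOn

section ParametricIntegral

variable {K : Type*} [MeasurableSpace K] {μ : Measure K} {S : Set ℝ} {f : ℝ → K → ℝ}
  {s t : ℝ}

lemma integrable_slope (hs : Integrable (f s) μ) (ht : Integrable (f t) μ) :
    Integrable (fun p => slope (f · p) t s) μ := by
  simp only [slope_def_field]
  exact (hs.sub ht).div_const (s - t)

lemma integral_slope (hs : Integrable (f s) μ) (ht : Integrable (f t) μ) :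
    ∫ p, slope (f · p) t s ∂μ = slope (fun u => ∫ p, f u p ∂μ) t s := by
  simp only [slope_def_field]
  rw [integral_div, integral_sub hs ht]

lemma convexOn_integral (hS : Convex ℝ S) (hconv : ∀ᵐ p ∂μ, ConvexOn ℝ S (f · p))
    (hint : ∀ s ∈ S, Integrable (f s) μ) : ConvexOn ℝ S (fun s => ∫ p, f s p ∂μ) := by
  refine ⟨hS, fun x hx y hy a b ha hb hab => ?_⟩
  have hax : Integrable (fun p => a • f x p) μ := (hint x hx).smul a
  have hby : Integrable (fun p => b • f y p) μ := (hint y hy).smul b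
  calc ∫ p, f (a • x + b • y) p ∂μ
      ≤ ∫ p, a • f x p + b • f y p ∂μ :=
        integral_mono_ae (hint _ (hS hx hy ha hb hab)) (hax.add hby)
          (hconv.mono fun p hp => hp.2 hx hy ha hb hab)
    _ = a • ∫ p, f x p ∂μ + b • ∫ p, f y p ∂μ := by
        rw [integral_add hax hby, integral_smul, integral_smul]

theorem tendsto_slope_integral_of_convexOn {l : Filter ℝ} [l.IsCountablyGenerated]
    (hl : l ≤ 𝓝[≠] t) (hconv : ∀ᵐ p ∂μ, ConvexOn ℝ S (f · p))
    (hint : ∀ s ∈ S, Integrable (f s) μ) (ht : t ∈ interior S) {D : K → ℝ}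
    (hD : ∀ᵐ p ∂μ, Tendsto (slope (f · p) t) l (𝓝 (D p))) :
    Tendsto (slope (fun s => ∫ p, f s p ∂μ) t) l (𝓝 (∫ p, D p ∂μ)) := by
  have hSt : S ∈ 𝓝 t := mem_interior_iff_mem_nhds.1 ht
  have htS : t ∈ S := mem_of_mem_nhds hSt
  obtain ⟨a, hat, haS⟩ := Eventually.exists_lt hSt
  obtain ⟨b, htb, hbS⟩ := Eventually.exists_gt hSt
  have ha : a ∈ S \ {t} := ⟨haS, hat.ne⟩
  have hb : b ∈ S \ {t} := ⟨hbS, htb.ne'⟩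
  have hnear : ∀ᶠ s in l, s ∈ S \ {t} ∧ s ∈ Icc a b := hl <| by
    filter_upwards [self_mem_nhdsWithin, nhdsWithin_le_nhds hSt,
      nhdsWithin_le_nhds (Icc_mem_nhds hat htb)] with s hst hsS hsab
    exact ⟨⟨hsS, hst⟩, hsab⟩
  have hbound : ∀ᶠ s in l, ∀ᵐ p ∂μ,
      ‖slope (f · p) t s‖ ≤ |slope (f · p) t a| + |slope (f · p) t b| := by
    filter_upwards [hnear] with s ⟨hs, has, hsb⟩
    filter_upwards [hconv] with p hp
    exact hp.abs_slope_le_of_mem_Icc htS ha hb hs has hsb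
  refine (tendsto_integral_filter_of_dominated_convergence _
    (hnear.mono fun s hs => (integrable_slope (hint s hs.1.1) (hint t htS)).aestronglyMeasurable)
    hbound ((integrable_slope (hint a haS) (hint t htS)).abs.add
      (integrable_slope (hint b hbS) (hint t htS)).abs) hD).congr' ?_
  filter_upwards [hnear] with s hs
  exact integral_slope (hint s hs.1.1) (hint t htS)

theorem hasDerivWithinAt_Ici_integral_of_convexOn (hconv : ∀ᵐ p ∂μ, ConvexOn ℝ S (f · p))
    (hint : ∀ s ∈ S, Integrable (f s) μ) (ht : t ∈ interior S) :
    HasDerivWithinAt (fun s => ∫ p, f s p ∂μ)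
      (∫ p, derivWithin (f · p) (Ici t) t ∂μ) (Ici t) t := by
  rw [← hasDerivWithinAt_Ioi_iff_Ici, hasDerivWithinAt_iff_tendsto_slope' self_notMem_Ioi]
  exact tendsto_slope_integral_of_convexOn (nhdsGT_le_nhdsNE t) hconv
    hint ht (hconv.mono fun p hp => hp.tendsto_slope_derivWithin_Ici ht)

theorem hasDerivWithinAt_Iic_integral_of_convexOn (hconv : ∀ᵐ p ∂μ, ConvexOn ℝ S (f · p))
    (hint : ∀ s ∈ S, Integrable (f s) μ) (ht : t ∈ interior S) :
    HasDerivWithinAt (fun s => ∫ p, f s p ∂μ)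
      (∫ p, derivWithin (f · p) (Iic t) t ∂μ) (Iic t) t := by
  rw [← hasDerivWithinAt_Iio_iff_Iic, hasDerivWithinAt_iff_tendsto_slope' self_notMem_Iio]
  exact tendsto_slope_integral_of_convexOn (nhdsLT_le_nhdsNE t) hconv
    hint ht (hconv.mono fun p hp => hp.tendsto_slope_derivWithin_Iic ht)

theorem hasDerivAt_integral_of_convexOn (hconv : ∀ᵐ p ∂μ, ConvexOn ℝ S (f · p))
    (hint : ∀ s ∈ S, Integrable (f s) μ) (ht : t ∈ interior S)
    (hLR : ∀ᵐ p ∂μ, derivWithin (f · p) (Iic t) t = derivWithin (f · p) (Ici t) t) :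
    HasDerivAt (fun s => ∫ p, f s p ∂μ) (∫ p, derivWithin (f · p) (Ici t) t ∂μ) t := by
  have hleft := hasDerivWithinAt_Iic_integral_of_convexOn hconv hint ht
  rw [integral_congr_ae hLR] at hleft
  simpa only [Iic_union_Ici, hasDerivWithinAt_univ] using
    hleft.union (hasDerivWithinAt_Ici_integral_of_convexOn hconv hint ht)

end ParametricIntegral

/-- Differentiating an integral of convex functions of a parameter: if
`t ↦ f t p` is convex on `[0,1]` for each `p`, uniformly bounded and
measurable, then `g t = ∫ p, f t p dμ` is convex; at each interior `t` it has
left/right derivatives equal to the integrals of the pointwise left/right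
derivatives, and it is differentiable whenever these coincide a.e. -/
theorem stmt18 {K : Type*} [MeasurableSpace K] (μ : Measure K)
    [IsFiniteMeasure μ] (f : ℝ → K → ℝ)
    (hconv : ∀ p, ConvexOn ℝ (Icc (0:ℝ) 1) (fun t => f t p))
    (hmeas : ∀ t ∈ Icc (0:ℝ) 1, AEStronglyMeasurable (f t) μ)
    (C : ℝ) (hbdd : ∀ t ∈ Icc (0:ℝ) 1, ∀ p, |f t p| ≤ C) :
    ConvexOn ℝ (Icc (0:ℝ) 1) (fun t => ∫ p, f t p ∂μ) ∧
    (∀ t ∈ Ioo (0:ℝ) 1,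
      HasDerivWithinAt (fun s => ∫ p, f s p ∂μ)
        (∫ p, derivWithin (fun s => f s p) (Iic t) t ∂μ) (Iic t) t ∧
      HasDerivWithinAt (fun s => ∫ p, f s p ∂μ)
        (∫ p, derivWithin (fun s => f s p) (Ici t) t ∂μ) (Ici t) t) ∧
    (∀ t ∈ Ioo (0:ℝ) 1,
      (∀ᵐ p ∂μ, derivWithin (fun s => f s p) (Iic t) t =
        derivWithin (fun s => f s p) (Ici t) t) →
      HasDerivAt (fun s => ∫ p, f s p ∂μ)
        (∫ p, derivWithin (fun s => f s p) (Ici t) t ∂μ) t) := by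
  have hint : ∀ t ∈ Icc (0:ℝ) 1, Integrable (f t) μ := fun t ht =>
    Integrable.of_bound (hmeas t ht) C (ae_of_all _ fun p => hbdd t ht p)
  have hconv' : ∀ᵐ p ∂μ, ConvexOn ℝ (Icc (0:ℝ) 1) (f · p) := ae_of_all _ hconv
  have hinterior : ∀ t ∈ Ioo (0:ℝ) 1, t ∈ interior (Icc (0:ℝ) 1) := fun t ht => by
    rwa [interior_Icc]
  exact ⟨convexOn_integral (convex_Icc 0 1) hconv' hint,
    fun t ht => ⟨hasDerivWithinAt_Iic_integral_of_convexOn hconv' hint (hinterior t ht),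
      hasDerivWithinAt_Ici_integral_of_convexOn hconv' hint (hinterior t ht)⟩,
    fun t ht => hasDerivAt_integral_of_convexOn hconv' hint (hinterior t ht)⟩
end
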